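/- Let γ be an irrational non-Liouville real number. Then for Lebesgue almost every real number β, the numbers 1, γ, β are linearly independent over ℚ and the pair (γ,β) is Diophantine, i.e. there exist c, ρ > 0 such that ‖n₁γ + n₂β‖ ≥ c·max(|n₁|,|n₂|)^{−ρ} for all integers n₁, n₂ not both zero. -/

import Mathlib

/-!
Fix `ρ > 2` with `ρ ≥ α`, and encode a pair `(n₁, n₂)` as `n : Fin 2 → ℤ`, whose sup norm is
`max |n₁| |n₂|`. For `n₂ ≠ 0` the set of `β` in a unit interval with
`‖n₁γ + n₂β‖ < c ‖n‖^(-ρ)` is covered by `O(|n₂|)` intervals of length `2c ‖n‖^(-ρ) / |n₂|`,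
so it has measure `O(c ‖n‖^(-ρ))`; for `n₂ = 0` it is empty once `c` is below the
non-Liouville constant of `γ`. Since `∑ ‖n‖^(-ρ) < ∞`, the non-Diophantine `β` in a unit
interval have measure `O(c)` for every small `c`, hence measure zero. Linear independence
is automatic: a rational relation `m₀ + m₁γ + m₂β = 0` would give `‖m₁γ + m₂β‖ = 0`.
-/

open MeasureTheory

/-- Distance from a real number to the nearest integer. -/
noncomputable def nint (x : ℝ) : ℝ := |x - round x|

/-- A pair `(γ, β)` of real numbers is Diophantine. -/
def DiophPair (γ β : ℝ) : Prop :=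
  ∃ c ρ : ℝ, 0 < c ∧ 0 < ρ ∧ ∀ n₁ n₂ : ℤ, ¬(n₁ = 0 ∧ n₂ = 0) →
    nint (n₁ * γ + n₂ * β) ≥ c * ((max n₁.natAbs n₂.natAbs : ℕ) : ℝ) ^ (-ρ)

open Set Filter Topology

lemma nint_intCast (n : ℤ) : nint n = 0 := by
  simp [nint]

lemma nint_neg (x : ℝ) : nint (-x) = nint x := by
  refine le_antisymm ?_ ?_
  · simpa [nint, abs_sub_comm, neg_add_eq_sub] using round_le (-x) (-round x)
  · have h := round_le x (-round (-x))
    rwa [Int.cast_neg, sub_neg_eq_add, ← abs_neg (x + _), neg_add'] at h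

lemma nint_intCast_mul (n : ℤ) (x : ℝ) : nint (n * x) = nint (n.natAbs * x) := by
  obtain ⟨m, rfl | rfl⟩ := Int.eq_nat_or_neg n <;> simp [nint_neg]

lemma card_Icc_ceil_floor_le {u v : ℝ} (h : u ≤ v) :
    ((Finset.Icc ⌈u⌉ ⌊v⌋).card : ℝ) ≤ v - u + 1 := by
  have hle : ⌈u⌉ ≤ ⌊v⌋ + 1 := by
    have : (⌈u⌉ : ℝ) < ⌊v⌋ + 2 := by
      linarith [Int.ceil_lt_add_one u, Int.lt_floor_add_one v]
    have : ⌈u⌉ < ⌊v⌋ + 2 := by exact_mod_cast this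
    omega
  have hcard : ((Finset.Icc ⌈u⌉ ⌊v⌋).card : ℝ) = ⌊v⌋ + 1 - ⌈u⌉ := by
    exact_mod_cast Int.card_Icc_of_le _ _ hle
  linarith [Int.floor_le v, Int.le_ceil u]

lemma volume_nint_lt_inter_Ico_le (θ a x : ℝ) {ε : ℝ} (ha : 1 ≤ |a|) (hε : 0 ≤ ε) :
    volume ({β | nint (θ + a * β) < ε} ∩ Ico x (x + 1)) ≤ ENNReal.ofReal (8 * ε) := by
  have ha₀ : a ≠ 0 := by rintro rfl; norm_num at ha
  set y := θ + a * x
  set M := Finset.Icc ⌈y - |a| - 1 / 2⌉ ⌊y + |a| + 1 / 2⌋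
  have hcover : {β | nint (θ + a * β) < ε} ∩ Ico x (x + 1) ⊆
      ⋃ m ∈ M, (a * ·) ⁻¹' Metric.ball ((m : ℝ) - θ) ε := by
    rintro β ⟨hβ, hxβ, hβx⟩
    have hshift : |a * β - a * x| ≤ |a| := by
      rw [← mul_sub, abs_mul]
      exact mul_le_of_le_one_right (abs_nonneg a) (abs_le.mpr ⟨by linarith, by linarith⟩)
    have hround := abs_le.mp (abs_sub_round (θ + a * β))
    refine mem_iUnion₂.mpr ⟨round (θ + a * β), ?_, ?_⟩
    · rw [Finset.mem_Icc, Int.ceil_le, Int.le_floor]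
      constructor <;> linarith [abs_le.mp hshift]
    · rw [mem_preimage, Metric.mem_ball, Real.dist_eq, show a * β - (round (θ + a * β) - θ) =
        θ + a * β - round (θ + a * β) by ring]
      exact hβ
  have hM : (M.card : ℝ) ≤ 2 * |a| + 2 := by
    linarith [card_Icc_ceil_floor_le (u := y - |a| - 1 / 2) (v := y + |a| + 1 / 2) (by linarith)]
  calc volume ({β | nint (θ + a * β) < ε} ∩ Ico x (x + 1))
      ≤ volume (⋃ m ∈ M, (a * ·) ⁻¹' Metric.ball ((m : ℝ) - θ) ε) := measure_mono hcover
    _ ≤ ∑ m ∈ M, volume ((a * ·) ⁻¹' Metric.ball ((m : ℝ) - θ) ε) :=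
        measure_biUnion_finset_le _ _
    _ = ENNReal.ofReal (M.card * (|a|⁻¹ * (2 * ε))) := by
        simp only [Real.volume_preimage_mul_left ha₀, Real.volume_ball, Finset.sum_const,
          nsmul_eq_mul, abs_inv]
        rw [ENNReal.ofReal_mul (M.card.cast_nonneg), ENNReal.ofReal_natCast,
          ENNReal.ofReal_mul (inv_nonneg.mpr (abs_nonneg a))]
    _ ≤ ENNReal.ofReal (8 * ε) := by
        refine ENNReal.ofReal_le_ofReal ?_
        have ha' : 0 < |a| := by positivity
        calc (M.card : ℝ) * (|a|⁻¹ * (2 * ε)) ≤ (2 * |a| + 2) * (|a|⁻¹ * (2 * ε)) := by gcongr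
          _ = 4 * ε + 4 * ε / |a| := by field_simp; ring
          _ ≤ 8 * ε := by linarith [div_le_self (by positivity : 0 ≤ 4 * ε) ha]

lemma setOf_not_diophPair_subset {γ c ρ : ℝ} (hc : 0 < c) (hρ : 0 < ρ) :
    {β | ¬DiophPair γ β} ⊆ ⋃ n : Fin 2 → ℤ, {β | nint (n 0 * γ + n 1 * β) < c * ‖n‖ ^ (-ρ)} := by
  intro β hβ
  by_contra hcover
  refine hβ ⟨c, ρ, hc, hρ, fun n₁ n₂ _ => ?_⟩
  have hn : ¬ nint (n₁ * γ + n₂ * β) < c * ‖![n₁, n₂]‖ ^ (-ρ) :=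
    fun h => hcover (mem_iUnion.mpr ⟨![n₁, n₂], h⟩)
  simpa [EisensteinSeries.norm_eq_max_natAbs] using hn

section NonLiouville

variable {γ c₀ α : ℝ} (hγ : ∀ n : ℕ, 0 < n → nint (n * γ) ≥ c₀ * (n : ℝ) ^ (-α))
include hγ

lemma mul_natAbs_rpow_le_nint {c ρ : ℝ} (hc : 0 ≤ c) (hcc₀ : c ≤ c₀) (hαρ : α ≤ ρ) (hρ : 0 < ρ)
    (n : ℤ) : c * (n.natAbs : ℝ) ^ (-ρ) ≤ nint (n * γ) := by
  rcases eq_or_ne n 0 with rfl | hn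
  · simp [Real.zero_rpow (neg_ne_zero.mpr hρ.ne'), nint]
  have hk : 1 ≤ (n.natAbs : ℝ) := by exact_mod_cast Int.natAbs_pos.mpr hn
  rw [nint_intCast_mul]
  calc c * (n.natAbs : ℝ) ^ (-ρ) ≤ c₀ * (n.natAbs : ℝ) ^ (-α) := by
        gcongr
        exact hc.trans hcc₀
    _ ≤ nint (n.natAbs * γ) := hγ _ (Int.natAbs_pos.mpr hn)

lemma volume_nint_lt_norm_rpow_inter_Ico_le {c ρ : ℝ} (hc : 0 ≤ c) (hcc₀ : c ≤ c₀) (hαρ : α ≤ ρ)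
    (hρ : 0 < ρ) (x : ℝ) (n : Fin 2 → ℤ) :
    volume ({β | nint (n 0 * γ + n 1 * β) < c * ‖n‖ ^ (-ρ)} ∩ Ico x (x + 1)) ≤
      ENNReal.ofReal (8 * (c * ‖n‖ ^ (-ρ))) := by
  rcases eq_or_ne (n 1) 0 with hn | hn
  · have hempty : {β | nint (n 0 * γ + n 1 * β) < c * ‖n‖ ^ (-ρ)} = ∅ := by
      refine eq_empty_of_forall_notMem fun β hβ => (mul_natAbs_rpow_le_nint hγ hc hcc₀ hαρ hρ
        (n 0)).not_gt ?_
      simpa [hn, EisensteinSeries.norm_eq_max_natAbs] using hβ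
    simp [hempty]
  · have ha : 1 ≤ |(n 1 : ℝ)| := by exact_mod_cast Int.one_le_abs hn
    exact volume_nint_lt_inter_Ico_le _ _ x ha (by positivity)

lemma volume_setOf_not_diophPair_inter_Ico (hc₀ : 0 < c₀) (x : ℝ) :
    volume ({β | ¬DiophPair γ β} ∩ Ico x (x + 1)) = 0 := by
  set ρ := max α 3
  have hρ : 0 < ρ := lt_max_of_lt_right three_pos
  have hsum : Summable fun n : Fin 2 → ℤ => ‖n‖ ^ (-ρ) :=
    EisensteinSeries.summable_one_div_norm_rpow (lt_max_of_lt_right (by norm_num))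
  set K := ∑' n : Fin 2 → ℤ, ‖n‖ ^ (-ρ)
  have hbound : ∀ c ∈ Ioo 0 c₀, volume ({β | ¬DiophPair γ β} ∩ Ico x (x + 1)) ≤
      ENNReal.ofReal (8 * c * K) := by
    rintro c ⟨hc, hcc₀⟩
    calc volume ({β | ¬DiophPair γ β} ∩ Ico x (x + 1))
        ≤ volume (⋃ n : Fin 2 → ℤ,
            {β | nint (n 0 * γ + n 1 * β) < c * ‖n‖ ^ (-ρ)} ∩ Ico x (x + 1)) := by
          rw [← iUnion_inter]
          exact measure_mono (inter_subset_inter_left _ (setOf_not_diophPair_subset hc hρ))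
      _ ≤ ∑' n : Fin 2 → ℤ, ENNReal.ofReal (8 * (c * ‖n‖ ^ (-ρ))) :=
          (measure_iUnion_le _).trans (ENNReal.tsum_le_tsum fun n =>
            volume_nint_lt_norm_rpow_inter_Ico_le hγ hc.le hcc₀.le (le_max_left _ _) hρ x n)
      _ = ENNReal.ofReal (8 * c * K) := by
          rw [← ENNReal.ofReal_tsum_of_nonneg (fun n => by positivity)
            ((hsum.mul_left c).mul_left 8), tsum_mul_left, tsum_mul_left, mul_assoc]
  have htendsto : Tendsto (fun c => ENNReal.ofReal (8 * c * K)) (𝓝[>] 0) (𝓝 0) := by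
    have hcont : Continuous fun c : ℝ => ENNReal.ofReal (8 * c * K) :=
      ENNReal.continuous_ofReal.comp (by fun_prop)
    simpa using (hcont.tendsto 0).mono_left nhdsWithin_le_nhds
  exact nonpos_iff_eq_zero.mp
    (ge_of_tendsto htendsto (eventually_of_mem (Ioo_mem_nhdsGT hc₀) hbound))

lemma ae_diophPair (hc₀ : 0 < c₀) : ∀ᵐ β, DiophPair γ β := by
  rw [ae_iff]
  have hcover : {β | ¬DiophPair γ β} = ⋃ m : ℤ, {β | ¬DiophPair γ β} ∩ Ico (m : ℝ) (m + 1) := by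
    rw [← inter_iUnion, iUnion_Ico_intCast, inter_univ]
  rw [hcover]
  exact measure_iUnion_null fun m => volume_setOf_not_diophPair_inter_Ico hγ hc₀ m

end NonLiouville

lemma DiophPair.linearIndependent {γ β : ℝ} (h : DiophPair γ β) :
    LinearIndependent ℚ ![(1 : ℝ), γ, β] := by
  rw [← LinearIndependent.iff_fractionRing ℤ ℚ, Fintype.linearIndependent_iff]
  intro g hg
  simp only [Fin.sum_univ_three, Matrix.cons_val, zsmul_eq_mul, mul_one] at hg
  obtain ⟨c, ρ, hc, hρ, hbound⟩ := h
  have h₁₂ : g 1 = 0 ∧ g 2 = 0 := by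
    by_contra hne
    have hlow := hbound (g 1) (g 2) hne
    rw [show (g 1 : ℝ) * γ + g 2 * β = ((-g 0 : ℤ) : ℝ) by push_cast; linarith,
      nint_intCast] at hlow
    have hN : 0 < max (g 1).natAbs (g 2).natAbs := by omega
    have : 0 < c * ((max (g 1).natAbs (g 2).natAbs : ℕ) : ℝ) ^ (-ρ) := by positivity
    linarith
  have h₀ : g 0 = 0 := by
    rw [h₁₂.1, h₁₂.2] at hg
    exact_mod_cast (by simpa using hg : (g 0 : ℝ) = 0)
  intro i
  fin_cases i
  exacts [h₀, h₁₂.1, h₁₂.2]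

theorem stmt10_general (γ : ℝ)
    (hNL : ∃ c α : ℝ, 0 < c ∧ 0 < α ∧ ∀ n : ℕ, 0 < n → nint (n * γ) ≥ c * (n : ℝ) ^ (-α)) :
    ∀ᵐ β : ℝ ∂volume, LinearIndependent ℚ ![(1:ℝ), γ, β] ∧ DiophPair γ β := by
  obtain ⟨c₀, α, hc₀, -, hγ⟩ := hNL
  filter_upwards [ae_diophPair hγ hc₀] with β hβ
  exact ⟨hβ.linearIndependent, hβ⟩

theorem stmt10 (γ : ℝ) (hγ : Irrational γ)
    (hNL : ∃ c α : ℝ, 0 < c ∧ 0 < α ∧ ∀ n : ℕ, 0 < n → nint (n * γ) ≥ c * (n : ℝ) ^ (-α)) :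
    ∀ᵐ β : ℝ ∂volume, LinearIndependent ℚ ![(1:ℝ), γ, β] ∧ DiophPair γ β :=
  stmt10_general γ hNL
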